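/- arXiv:2401.04640 — 7 statements merged into one kernel-verified Lean document; each statement's English description precedes it below -/
import Mathlib

section
/- Let f : ℝⁿ → ℝ be differentiable and convex along coordinates (for every x ∈ ℝⁿ and every block i the map d ↦ f(x + Uᵢd) is convex), and suppose there are constants Lᵢ > 0 such that f(x + Uᵢh) − f(x) − ⟨Uᵢᵀ∇f(x), h⟩ ≤ (Lᵢ/2)‖h‖² for all x ∈ ℝⁿ, h ∈ ℝ^{nᵢ} and all i. Then for all x ∈ ℝⁿ, h ∈ ℝ^{nᵢ} and all i the gradient of f is block coordinate-wise Lipschitz: ‖Uᵢᵀ(∇f(x + Uᵢh) − ∇f(x))‖ ≤ Lᵢ‖h‖. -/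
/-!
On a block subspace `K`, the function `φ d = f (x + d)` is convex with gradient
`Pₖ ∇f (x + d)` and satisfies the descent inequality with constant `L`. Testing convexity at `u`
and the descent inequality at `v` against the gradient step `w = v - (∇φ v - ∇φ u) / L` gives
`φ u + ⟪∇φ u, v - u⟫ + ‖∇φ v - ∇φ u‖² / (2L) ≤ φ v`; adding this to the same bound with `u`, `v`
swapped gives `‖∇φ v - ∇φ u‖² / L ≤ ⟪∇φ v - ∇φ u, v - u⟫`, and Cauchy–Schwarz concludes.
-/

noncomputable section
open scoped RealInnerProductSpace

/-- `blockProj b i x` models `Uᵢ Uᵢᵀ x`: the vector of `ℝⁿ` keeping the coordinates of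
block `i` (as given by the block assignment `b : Fin n → Fin N`) and zeroing the others.
A vector `h` of the block subspace `ℝ^{nᵢ}` (i.e. `Uᵢ h`) is modeled as a vector with
`blockProj b i h = h`; then `‖Uᵢᵀ y‖ = ‖blockProj b i y‖` and `⟨Uᵢᵀ y, h⟩ = ⟪y, h⟫`. -/
def blockProj {n N : ℕ} (b : Fin n → Fin N) (i : Fin N) (x : EuclideanSpace ℝ (Fin n)) :
    EuclideanSpace ℝ (Fin n) :=
  (EuclideanSpace.equiv (Fin n) ℝ).symm (fun j => if b j = i then x j else 0)

section FirstOrderConvexity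

variable {E : Type*} [NormedAddCommGroup E] {s : Set E} {φ : E → ℝ} {u v : E}

theorem ConvexOn.add_fderiv_sub_le [NormedSpace ℝ E] {φ' : StrongDual ℝ E}
    (hφ : ConvexOn ℝ s φ) (hu : u ∈ s) (hv : v ∈ s) (hφ' : HasFDerivAt φ φ' u) :
    φ u + φ' (v - u) ≤ φ v := by
  let γ : ℝ →ᵃ[ℝ] E := AffineMap.lineMap u v
  have hconv : ConvexOn ℝ (Set.Icc 0 1) (φ ∘ γ) :=
    (hφ.comp_affineMap γ).subset (fun _ ht ↦ hφ.1.lineMap_mem hu hv ht) (convex_Icc 0 1)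
  have hderiv : HasDerivAt (φ ∘ γ) (φ' (v - u)) 0 := by
    refine HasFDerivAt.comp_hasDerivAt 0 ?_ AffineMap.hasDerivAt_lineMap
    simpa [γ] using hφ'
  have := hconv.le_slope_of_hasDerivAt (by simp) (by simp) zero_lt_one hderiv
  simp only [slope, Function.comp_apply, sub_zero, inv_one, one_smul, γ,
    AffineMap.lineMap_apply_zero, AffineMap.lineMap_apply_one, vsub_eq_sub] at this
  linarith

theorem ConvexOn.add_inner_sub_le_of_hasGradientAt [InnerProductSpace ℝ E] [CompleteSpace E]
    {g : E} (hφ : ConvexOn ℝ s φ) (hu : u ∈ s) (hv : v ∈ s) (hg : HasGradientAt φ g u) :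
    φ u + ⟪g, v - u⟫ ≤ φ v :=
  hφ.add_fderiv_sub_le hu hv hg.hasFDerivAt

end FirstOrderConvexity

section QuadraticSandwich

variable {E : Type*} [NormedAddCommGroup E] [InnerProductSpace ℝ E] (K : Submodule ℝ E)
  {φ : E → ℝ} {g : E → E} {L : ℝ}

theorem add_inner_add_norm_sq_div_le_of_quadratic_sandwich (hL : 0 < L)
    (hg : ∀ u ∈ K, g u ∈ K)
    (hlower : ∀ u ∈ K, ∀ v ∈ K, φ u + ⟪g u, v - u⟫ ≤ φ v)
    (hupper : ∀ u ∈ K, ∀ v ∈ K, φ v ≤ φ u + ⟪g u, v - u⟫ + L / 2 * ‖v - u‖ ^ 2)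
    {u v : E} (hu : u ∈ K) (hv : v ∈ K) :
    φ u + ⟪g u, v - u⟫ + ‖g v - g u‖ ^ 2 / (2 * L) ≤ φ v := by
  set D := g v - g u
  set w := v - L⁻¹ • D
  have hw : w ∈ K := K.sub_mem hv (K.smul_mem _ (K.sub_mem (hg v hv) (hg u hu)))
  have h_up := hupper v hv w hw
  have h_low := hlower u hu w hw
  have hwv : w - v = -(L⁻¹ • D) := by simp [w]
  have hwu : w - u = (v - u) - L⁻¹ • D := by simp only [w]; abel
  rw [hwv, inner_neg_right, real_inner_smul_right, norm_neg, norm_smul, Real.norm_eq_abs,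
    abs_of_pos (inv_pos.2 hL)] at h_up
  rw [hwu, inner_sub_right, real_inner_smul_right] at h_low
  have hD : L⁻¹ * ⟪g v, D⟫ - L⁻¹ * ⟪g u, D⟫ = L⁻¹ * ‖D‖ ^ 2 := by
    rw [← mul_sub, ← inner_sub_left, real_inner_self_eq_norm_sq]
  have hcoef : L / 2 * (L⁻¹ * ‖D‖) ^ 2 = L⁻¹ * ‖D‖ ^ 2 - ‖D‖ ^ 2 / (2 * L) := by
    field_simp; ring
  linarith

theorem norm_sub_le_mul_of_quadratic_sandwich (hL : 0 < L)
    (hg : ∀ u ∈ K, g u ∈ K)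
    (hlower : ∀ u ∈ K, ∀ v ∈ K, φ u + ⟪g u, v - u⟫ ≤ φ v)
    (hupper : ∀ u ∈ K, ∀ v ∈ K, φ v ≤ φ u + ⟪g u, v - u⟫ + L / 2 * ‖v - u‖ ^ 2)
    {u v : E} (hu : u ∈ K) (hv : v ∈ K) :
    ‖g v - g u‖ ≤ L * ‖v - u‖ := by
  have huv := add_inner_add_norm_sq_div_le_of_quadratic_sandwich K hL hg hlower hupper hu hv
  have hvu := add_inner_add_norm_sq_div_le_of_quadratic_sandwich K hL hg hlower hupper hv hu
  rw [norm_sub_rev (g u)] at hvu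
  have hinner : ⟪g v - g u, v - u⟫ = -(⟪g u, v - u⟫ + ⟪g v, u - v⟫) := by
    rw [inner_sub_left, ← neg_sub v u, inner_neg_right]; ring
  have hhalves :
      ‖g v - g u‖ ^ 2 / (2 * L) + ‖g v - g u‖ ^ 2 / (2 * L) = ‖g v - g u‖ ^ 2 / L := by
    field_simp; ring
  have hmono : ‖g v - g u‖ ^ 2 / L ≤ ⟪g v - g u, v - u⟫ := by linarith
  have hcs := mul_le_mul_of_nonneg_right (real_inner_le_norm (g v - g u) (v - u)) hL.le
  rw [div_le_iff₀ hL] at hmono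
  nlinarith [mul_nonneg hL.le (norm_nonneg (v - u))]

end QuadraticSandwich

section Blocks

variable {n N : ℕ} (b : Fin n → Fin N) (i : Fin N)

theorem blockProj_apply (x : EuclideanSpace ℝ (Fin n)) (j : Fin n) :
    blockProj b i x j = if b j = i then x j else 0 := rfl

def blockProjₗ : EuclideanSpace ℝ (Fin n) →ₗ[ℝ] EuclideanSpace ℝ (Fin n) where
  toFun := blockProj b i
  map_add' x y := by ext j; simp only [blockProj_apply, PiLp.add_apply]; split_ifs <;> simp
  map_smul' c x := by ext j; simp only [blockProj_apply, PiLp.smul_apply]; split_ifs <;> simp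

theorem blockProj_sub (x y : EuclideanSpace ℝ (Fin n)) :
    blockProj b i (x - y) = blockProj b i x - blockProj b i y :=
  map_sub (blockProjₗ b i) x y

/-- The block subspace `range Uᵢ`. -/
def blockSubspace : Submodule ℝ (EuclideanSpace ℝ (Fin n)) :=
  LinearMap.eqLocus (blockProjₗ b i) LinearMap.id

theorem mem_blockSubspace {d : EuclideanSpace ℝ (Fin n)} :
    d ∈ blockSubspace b i ↔ blockProj b i d = d := Iff.rfl

theorem blockProj_mem_blockSubspace (x : EuclideanSpace ℝ (Fin n)) :
    blockProj b i x ∈ blockSubspace b i := by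
  rw [mem_blockSubspace]
  ext j
  simp only [blockProj_apply]
  split_ifs <;> rfl

theorem inner_blockProj_left (x y : EuclideanSpace ℝ (Fin n)) :
    ⟪blockProj b i x, y⟫ = ⟪x, blockProj b i y⟫ := by
  simp only [PiLp.inner_apply, blockProj_apply]
  refine Finset.sum_congr rfl fun j _ ↦ ?_
  split_ifs <;> simp

theorem inner_blockProj_of_mem (x : EuclideanSpace ℝ (Fin n)) {y : EuclideanSpace ℝ (Fin n)}
    (hy : y ∈ blockSubspace b i) : ⟪blockProj b i x, y⟫ = ⟪x, y⟫ := by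
  rw [inner_blockProj_left, (mem_blockSubspace b i).1 hy]

end Blocks

/-- if `f` is differentiable, convex along coordinates, and satisfies the
blockwise descent inequality with constants `Lᵢ > 0`, then the gradient of `f` is block
coordinate-wise Lipschitz: `‖Uᵢᵀ(∇f(x+Uᵢh) − ∇f(x))‖ ≤ Lᵢ‖h‖`. -/
theorem coordinatewise_lipschitz_gradient (n N : ℕ) (b : Fin n → Fin N)
    (f : EuclideanSpace ℝ (Fin n) → ℝ) (L : Fin N → ℝ)
    (hdiff : Differentiable ℝ f)
    (hconv : ∀ (x : EuclideanSpace ℝ (Fin n)) (i : Fin N),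
      ConvexOn ℝ {d : EuclideanSpace ℝ (Fin n) | blockProj b i d = d} (fun d => f (x + d)))
    (hL : ∀ i, 0 < L i)
    (hdescent : ∀ (x h : EuclideanSpace ℝ (Fin n)) (i : Fin N), blockProj b i h = h →
      f (x + h) - f x - ⟪gradient f x, h⟫ ≤ L i / 2 * ‖h‖ ^ 2) :
    ∀ (x h : EuclideanSpace ℝ (Fin n)) (i : Fin N), blockProj b i h = h →
      ‖blockProj b i (gradient f (x + h) - gradient f x)‖ ≤ L i * ‖h‖ := by
  intro x h i hh
  let K := blockSubspace b i
  have hlower : ∀ u ∈ K, ∀ v ∈ K,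
      f (x + u) + ⟪blockProj b i (gradient f (x + u)), v - u⟫ ≤ f (x + v) := by
    intro u hu v hv
    rw [inner_blockProj_of_mem b i _ (K.sub_mem hv hu)]
    exact (hconv x i).add_inner_sub_le_of_hasGradientAt hu hv
      ((hasFDerivAt_comp_add_left x).2 (hdiff (x + u)).hasFDerivAt).hasGradientAt
  have hupper : ∀ u ∈ K, ∀ v ∈ K, f (x + v) ≤
      f (x + u) + ⟪blockProj b i (gradient f (x + u)), v - u⟫ + L i / 2 * ‖v - u‖ ^ 2 := by
    intro u hu v hv
    have hstep := hdescent (x + u) (v - u) i (K.sub_mem hv hu)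
    rw [add_add_sub_cancel] at hstep
    rw [inner_blockProj_of_mem b i _ (K.sub_mem hv hu)]
    linarith
  simpa [blockProj_sub] using
    norm_sub_le_mul_of_quadratic_sandwich K (hL i) (fun u _ ↦ blockProj_mem_blockSubspace b i _)
      hlower hupper K.zero_mem hh
end
end

section
/- Let κ, μ > 0, q ∈ [1,2), R > 0 and a, x ∈ ℝⁿ with ‖x − a‖ ≤ R. Then the infimum over u ∈ ℝⁿ of (κ/q)‖u − a‖^q + (μ/2)‖u − x‖² is at least κ²μ/(2(κ + μR^{2−q})²) · ‖x − a‖². -/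
noncomputable section

set_option maxHeartbeats 1000000 in
/-- let `κ, μ > 0`, `q ∈ [1,2)`, `R > 0` and `a, x ∈ ℝⁿ` with `‖x − a‖ ≤ R`.
Then the infimum over `u ∈ ℝⁿ` of `(κ/q)‖u − a‖^q + (μ/2)‖u − x‖²` is at least
`κ²μ/(2(κ + μR^{2−q})²) · ‖x − a‖²`. -/
theorem qgrowth_quadratic_inf_lower_bound (n : ℕ) (κ μ q R : ℝ)
    (hκ : 0 < κ) (hμ : 0 < μ) (hq1 : 1 ≤ q) (hq2 : q < 2) (hR : 0 < R)
    (a x : EuclideanSpace ℝ (Fin n)) (hxa : ‖x - a‖ ≤ R) :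
    ∀ u : EuclideanSpace ℝ (Fin n),
      κ ^ 2 * μ / (2 * (κ + μ * R ^ (2 - q)) ^ 2) * ‖x - a‖ ^ 2
        ≤ κ / q * ‖u - a‖ ^ q + μ / 2 * ‖u - x‖ ^ 2 := by
  intro u
  set d : ℝ := ‖x - a‖ with hd
  have hd0 : 0 ≤ d := norm_nonneg _
  have hP : 0 < R ^ (2 - q) := Real.rpow_pos_of_pos hR _
  set P : ℝ := R ^ (2 - q) with hPdef
  set t : ℝ := min ‖u - a‖ d with ht
  have ht0 : 0 ≤ t := le_min (norm_nonneg _) hd0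
  have htd : t ≤ d := min_le_right _ _
  have htR : t ≤ R := htd.trans hxa
  have hq0 : 0 < q := lt_of_lt_of_le one_pos hq1
  -- t^2 ≤ t^q * P
  have hrp : t ^ (2:ℝ) ≤ t ^ q * P := by
    rcases eq_or_lt_of_le ht0 with h0 | h0
    · simp [← h0, Real.zero_rpow hq0.ne', Real.zero_rpow (by norm_num : (2:ℝ) ≠ 0)]
    · have h2q : t ^ (2 - q) ≤ P := Real.rpow_le_rpow ht0 htR (by linarith)
      calc t ^ (2:ℝ) = t ^ q * t ^ (2 - q) := by
            rw [← Real.rpow_add h0]; ring_nf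
        _ ≤ t ^ q * P := by
            have := Real.rpow_nonneg ht0 q
            nlinarith
  have hrp2 : t ^ 2 ≤ t ^ q * P := by
    rw [← Real.rpow_natCast t 2]; exact_mod_cast hrp
  have htq0 : 0 ≤ t ^ q := Real.rpow_nonneg ht0 q
  -- step 1
  have h1 : κ / (2 * P) * t ^ 2 ≤ κ / q * ‖u - a‖ ^ q := by
    have hm : t ^ q ≤ ‖u - a‖ ^ q :=
      Real.rpow_le_rpow ht0 (min_le_left _ _) hq0.le
    have hqs : κ / 2 ≤ κ / q :=
      div_le_div_of_nonneg_left hκ.le hq0 hq2.le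
    have step1 : κ / (2 * P) * t ^ 2 ≤ κ / 2 * t ^ q := by
      rw [div_mul_eq_mul_div, div_le_iff₀ (by positivity)]
      nlinarith [mul_le_mul_of_nonneg_left hrp2 hκ.le]
    calc κ / (2 * P) * t ^ 2 ≤ κ / 2 * t ^ q := step1
      _ ≤ κ / q * t ^ q := mul_le_mul_of_nonneg_right hqs htq0
      _ ≤ κ / q * ‖u - a‖ ^ q :=
          mul_le_mul_of_nonneg_left hm (by positivity)
  -- step 2
  have h2 : μ / 2 * (d - t) ^ 2 ≤ μ / 2 * ‖u - x‖ ^ 2 := by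
    have htri : d ≤ ‖u - x‖ + ‖u - a‖ := by
      have := norm_sub_le_norm_sub_add_norm_sub x u a
      simpa [norm_sub_rev, hd] using this
    have hdt' : d - ‖u - x‖ ≤ t :=
      le_min (by linarith) (by linarith [norm_nonneg (u - x)])
    have hdt : d - t ≤ ‖u - x‖ := by linarith
    have h0 : 0 ≤ d - t := by linarith
    nlinarith [pow_le_pow_left₀ h0 hdt 2, hμ.le]
  -- step 3 : quadratic bound
  have key1 : κ * μ * P * d ^ 2 ≤ (κ + μ * P) * (κ * t ^ 2 + μ * P * (d - t) ^ 2) := by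
    nlinarith [sq_nonneg (κ * t - μ * P * (d - t))]
  have hbig : κ ^ 2 * μ * P * d ^ 2 ≤ (κ * t ^ 2 + μ * P * (d - t) ^ 2) * (κ + μ * P) ^ 2 := by
    nlinarith [mul_le_mul_of_nonneg_left key1 (by positivity : (0:ℝ) ≤ κ + μ * P),
      mul_nonneg (mul_nonneg hκ.le (mul_nonneg hμ.le hμ.le))
        (mul_nonneg (mul_nonneg hP.le hP.le) (sq_nonneg d))]
  have h3 : κ ^ 2 * μ / (2 * (κ + μ * P) ^ 2) * d ^ 2
      ≤ κ / (2 * P) * t ^ 2 + μ / 2 * (d - t) ^ 2 := by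
    rw [div_mul_eq_mul_div, div_le_iff₀ (by positivity)]
    have heq : (κ / (2 * P) * t ^ 2 + μ / 2 * (d - t) ^ 2) * (2 * (κ + μ * P) ^ 2)
        = ((κ * t ^ 2 + μ * P * (d - t) ^ 2) * (κ + μ * P) ^ 2) / P := by
      field_simp
    rw [heq, le_div_iff₀ hP]
    nlinarith [hbig]
  linarith
end
end

section
/- Let F : ℝⁿ → ℝ ∪ {+∞} be proper closed convex with nonempty minimizer set X* and minimal value F*, let γ > 0, and let F_γ be the Moreau envelope of F. Fix x₀. Suppose F satisfies 2-growth with constant κ > 0 on the level set {y : F(y) ≤ F(x₀)}, i.e. F(y) − F* ≥ (κ/2)‖y − ȳ‖² for all such y, where ȳ is the Euclidean projection of y onto X*. Then for every x with F_γ(x) ≤ F_γ(x₀): F_γ(x) − F* ≥ κ/(2(γκ + 1)) · ‖x − x̄‖², where x̄ is the Euclidean projection of x onto X*. -/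
/-!
Let `p` be the proximal point of `x`. Then `F p ≤ F_γ x ≤ F_γ x₀ ≤ F x₀`, so the growth condition
applies at `p`. Combined with `‖x - x̄‖ ≤ ‖x - p̄‖ ≤ ‖p - p̄‖ + ‖p - x‖` and the weighted inequality
`αβ/(α+β) (a+b)² ≤ α a² + β b²` for `α = κ/2`, `β = 1/(2γ)`, this gives the bound on
`F_γ x = F p + ‖p - x‖²/(2γ)`. The proximal point exists because `F` plus the quadratic penalty is
lower semicontinuous with bounded sublevel sets.
-/

open Set Metric

theorem LowerSemicontinuous.exists_forall_le_of_isCompact_sublevel {α β : Type*}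
    [TopologicalSpace α] [LinearOrder β] {f : α → β} (hf : LowerSemicontinuous f) (z : α)
    (hz : IsCompact (f ⁻¹' Iic (f z))) : ∃ p, ∀ u, f p ≤ f u := by
  obtain ⟨p, hpz, hp⟩ :=
    (hf.lowerSemicontinuousOn _).exists_isMinOn ⟨z, show f z ≤ f z from le_rfl⟩ hz
  refine ⟨p, fun u => ?_⟩
  by_cases hu : f u ≤ f z
  · exact hp hu
  · exact hpz.trans (not_le.mp hu).le

theorem LowerSemicontinuous.isClosed_setOf_eq_of_forall_le {α β : Type*} [TopologicalSpace α]
    [LinearOrder β] {f : α → β} (hf : LowerSemicontinuous f) {m : β} (hm : ∀ y, m ≤ f y) :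
    IsClosed {y | f y = m} := by
  convert hf.isClosed_preimage m using 1
  ext y
  exact ⟨le_of_eq, fun hy => le_antisymm hy (hm y)⟩

theorem IsClosed.exists_forall_norm_sub_le {E : Type*} [NormedAddCommGroup E] [ProperSpace E]
    {s : Set E} (hs : IsClosed s) (hne : s.Nonempty) (x : E) :
    ∃ y ∈ s, ∀ z ∈ s, ‖x - y‖ ≤ ‖x - z‖ := by
  obtain ⟨y, hy, hxy⟩ := hs.exists_infDist_eq_dist hne x
  refine ⟨y, hy, fun z hz => ?_⟩
  simpa only [← dist_eq_norm, ← hxy] using infDist_le_dist_of_mem hz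

theorem mul_div_add_mul_add_sq_le {α β : ℝ} (hα : 0 < α) (hβ : 0 < β) (a b : ℝ) :
    α * β / (α + β) * (a + b) ^ 2 ≤ α * a ^ 2 + β * b ^ 2 := by
  -- `(α a² + β b²)(α + β) - αβ (a + b)² = (α a - β b)²`
  rw [div_mul_eq_mul_div, div_le_iff₀ (by positivity)]
  nlinarith [sq_nonneg (α * a - β * b)]

theorem mul_div_add_mul_norm_sub_sq_le {E : Type*} [SeminormedAddCommGroup E] {α β : ℝ}
    (hα : 0 < α) (hβ : 0 < β) (x y p : E) :
    α * β / (α + β) * ‖x - y‖ ^ 2 ≤ α * ‖p - y‖ ^ 2 + β * ‖p - x‖ ^ 2 := by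
  have htri : ‖x - y‖ ≤ ‖p - y‖ + ‖p - x‖ := by
    rw [add_comm, norm_sub_rev p x]
    exact norm_sub_le_norm_sub_add_norm_sub x p y
  calc α * β / (α + β) * ‖x - y‖ ^ 2 ≤ α * β / (α + β) * (‖p - y‖ + ‖p - x‖) ^ 2 := by
        gcongr
    _ ≤ _ := mul_div_add_mul_add_sq_le hα hβ _ _

section Prox

variable {E : Type*} [NormedAddCommGroup E]

theorem lowerSemicontinuous_add_sq_norm_sub {f : E → EReal} (hf : LowerSemicontinuous f)
    (c : ℝ) (x : E) :
    LowerSemicontinuous fun u => f u + ((c * ‖u - x‖ ^ 2 : ℝ) : EReal) := by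
  exact hf.add' (continuous_coe_real_ereal.comp (by fun_prop)).lowerSemicontinuous
    fun u => EReal.continuousAt_add (Or.inr (EReal.coe_ne_bot _)) (Or.inr (EReal.coe_ne_top _))

theorem exists_forall_add_sq_norm_sub_le [ProperSpace E] {f : E → EReal}
    (hf : LowerSemicontinuous f) {m : ℝ} (hm : ∀ u, (m : EReal) ≤ f u) {c : ℝ} (hc : 0 < c)
    (x : E) :
    ∃ p, ∀ u, f p + ((c * ‖p - x‖ ^ 2 : ℝ) : EReal) ≤ f u + ((c * ‖u - x‖ ^ 2 : ℝ) : EReal) := by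
  set g := fun u => f u + ((c * ‖u - x‖ ^ 2 : ℝ) : EReal)
  by_cases htop : ∀ u, f u = ⊤
  · refine ⟨x, fun u => ?_⟩
    rw [htop, htop, EReal.top_add_of_ne_bot (EReal.coe_ne_bot _)]
    exact le_top
  push Not at htop
  obtain ⟨z, hz⟩ := htop
  set R := (f z).toReal + c * ‖z - x‖ ^ 2
  have hgz : g z = R := by
    have hzbot : f z ≠ ⊥ := ne_bot_of_le_ne_bot (EReal.coe_ne_bot m) (hm z)
    simp only [g, R, EReal.coe_add, EReal.coe_toReal hz hzbot]
  have hsub : g ⁻¹' Iic (g z) ⊆ closedBall x √((R - m) / c) := by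
    intro u hu
    have hreal : m + c * ‖u - x‖ ^ 2 ≤ R := by
      exact_mod_cast (add_le_add (hm u) le_rfl).trans (hu.trans hgz.le)
    have hsq : ‖u - x‖ ^ 2 ≤ (R - m) / c := by
      rw [le_div_iff₀ hc]; linarith
    simpa [dist_eq_norm, abs_of_nonneg (norm_nonneg _)] using Real.abs_le_sqrt hsq
  have hg : LowerSemicontinuous g := lowerSemicontinuous_add_sq_norm_sub hf c x
  exact hg.exists_forall_le_of_isCompact_sublevel z
    (isCompact_of_isClosed_isBounded (hg.isClosed_preimage _) (isBounded_closedBall.subset hsub))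

end Prox

theorem moreau_envelope_two_growth_general (n : ℕ)
    (F : EuclideanSpace ℝ (Fin n) → EReal)
    (hclosed : LowerSemicontinuous F)
    (Fs : ℝ) (Xs : Set (EuclideanSpace ℝ (Fin n)))
    (hXs : Xs = {y | F y = (Fs : EReal)})
    (hmin : ∀ y, (Fs : EReal) ≤ F y)
    (γ : ℝ) (hγ : 0 < γ)
    (Fγ : EuclideanSpace ℝ (Fin n) → EReal)
    (hFγ : ∀ x, Fγ x = ⨅ u, F u + ((1 / (2 * γ) * ‖u - x‖ ^ 2 : ℝ) : EReal))
    (x₀ : EuclideanSpace ℝ (Fin n)) (κ : ℝ) (hκ : 0 < κ)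
    (hgrowth : ∀ y, F y ≤ F x₀ → ∀ ybar ∈ Xs, (∀ z ∈ Xs, ‖y - ybar‖ ≤ ‖y - z‖) →
      ((Fs + κ / 2 * ‖y - ybar‖ ^ 2 : ℝ) : EReal) ≤ F y) :
    ∀ x, Fγ x ≤ Fγ x₀ → ∀ xbar ∈ Xs, (∀ z ∈ Xs, ‖x - xbar‖ ≤ ‖x - z‖) →
      ((Fs + κ / (2 * (γ * κ + 1)) * ‖x - xbar‖ ^ 2 : ℝ) : EReal) ≤ Fγ x := by
  intro x hxx₀ xbar hxbar hxproj
  obtain ⟨p, hp⟩ :=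
    exists_forall_add_sq_norm_sub_le hclosed hmin (by positivity : 0 < 1 / (2 * γ)) x
  have hpx : F p + ((1 / (2 * γ) * ‖p - x‖ ^ 2 : ℝ) : EReal) ≤ Fγ x := (hFγ x).symm ▸ le_iInf hp
  have hFγx₀ : Fγ x₀ ≤ F x₀ := by
    simpa using (hFγ x₀).le.trans (iInf_le _ x₀)
  have hFp : F p ≤ F x₀ :=
    (le_add_of_nonneg_right (EReal.coe_nonneg.mpr (by positivity))).trans
      (hpx.trans (hxx₀.trans hFγx₀))
  obtain ⟨pbar, hpbar, hpproj⟩ :=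
    (hXs ▸ hclosed.isClosed_setOf_eq_of_forall_le hmin).exists_forall_norm_sub_le ⟨xbar, hxbar⟩ p
  have hconst : κ / (2 * (γ * κ + 1)) = κ / 2 * (1 / (2 * γ)) / (κ / 2 + 1 / (2 * γ)) := by
    field_simp
  have hreal : κ / (2 * (γ * κ + 1)) * ‖x - xbar‖ ^ 2 ≤
      κ / 2 * ‖p - pbar‖ ^ 2 + 1 / (2 * γ) * ‖p - x‖ ^ 2 := by
    rw [hconst]
    calc _ ≤ κ / 2 * (1 / (2 * γ)) / (κ / 2 + 1 / (2 * γ)) * ‖x - pbar‖ ^ 2 := by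
          gcongr
          exact hxproj pbar hpbar
      _ ≤ _ := mul_div_add_mul_norm_sub_sq_le (by positivity) (by positivity) x pbar p
  calc ((Fs + κ / (2 * (γ * κ + 1)) * ‖x - xbar‖ ^ 2 : ℝ) : EReal)
      ≤ ((Fs + κ / 2 * ‖p - pbar‖ ^ 2 : ℝ) : EReal) +
          ((1 / (2 * γ) * ‖p - x‖ ^ 2 : ℝ) : EReal) := by
        rw [← EReal.coe_add, EReal.coe_le_coe_iff]
        linarith
    _ ≤ F p + ((1 / (2 * γ) * ‖p - x‖ ^ 2 : ℝ) : EReal) :=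
        add_le_add (hgrowth p hFp pbar hpbar hpproj) le_rfl
    _ ≤ Fγ x := hpx

/-- let `F : ℝⁿ → ℝ ∪ {+∞}` (modeled as an `EReal`-valued function never
taking the value `⊥`) be proper closed convex, with nonempty minimizer set `X*` and (real)
minimal value `F*`, let `γ > 0` and let `F_γ` be the Moreau envelope of `F`.  Fix `x₀`.
If `F` satisfies `2`-growth with constant `κ > 0` on the level set `{y : F(y) ≤ F(x₀)}`
(where `ybar` denotes the Euclidean projection of `y` onto `X*`, characterized by `ybar ∈ X*`
and `‖y − ybar‖ ≤ ‖y − z‖` for all `z ∈ X*`), then for every `x` with `F_γ(x) ≤ F_γ(x₀)`: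
`F_γ(x) − F* ≥ κ/(2(γκ + 1)) · ‖x − xbar‖²`. -/
theorem moreau_envelope_two_growth (n : ℕ)
    (F : EuclideanSpace ℝ (Fin n) → EReal)
    (hbot : ∀ x, F x ≠ ⊥) (hproper : ∃ x, F x ≠ ⊤)
    (hclosed : LowerSemicontinuous F)
    (hconvex : ∀ (u v : EuclideanSpace ℝ (Fin n)) (a c : ℝ), 0 ≤ a → 0 ≤ c → a + c = 1 →
      F (a • u + c • v) ≤ (a : EReal) * F u + (c : EReal) * F v)
    (Fs : ℝ) (Xs : Set (EuclideanSpace ℝ (Fin n)))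
    (hXsne : Xs.Nonempty) (hXs : Xs = {y | F y = (Fs : EReal)})
    (hmin : ∀ y, (Fs : EReal) ≤ F y)
    (γ : ℝ) (hγ : 0 < γ)
    (Fγ : EuclideanSpace ℝ (Fin n) → EReal)
    (hFγ : ∀ x, Fγ x = ⨅ u, F u + ((1 / (2 * γ) * ‖u - x‖ ^ 2 : ℝ) : EReal))
    (x₀ : EuclideanSpace ℝ (Fin n)) (κ : ℝ) (hκ : 0 < κ)
    (hgrowth : ∀ y, F y ≤ F x₀ → ∀ ybar ∈ Xs, (∀ z ∈ Xs, ‖y - ybar‖ ≤ ‖y - z‖) →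
      ((Fs + κ / 2 * ‖y - ybar‖ ^ 2 : ℝ) : EReal) ≤ F y) :
    ∀ x, Fγ x ≤ Fγ x₀ → ∀ xbar ∈ Xs, (∀ z ∈ Xs, ‖x - xbar‖ ≤ ‖x - z‖) →
      ((Fs + κ / (2 * (γ * κ + 1)) * ‖x - xbar‖ ^ 2 : ℝ) : EReal) ≤ Fγ x :=
  moreau_envelope_two_growth_general n F hclosed Fs Xs hXs hmin γ hγ Fγ hFγ x₀ κ hκ hgrowth
end

section
/- Let F, F_γ : ℝⁿ → ℝ, γ > 0 and D̄ > 0 satisfy F_γ(x) ≤ F(x) ≤ F_γ(x) + γD̄ for all x ∈ ℝⁿ. Assume F has nonempty minimizer set X* with minimal value F*, fix x₀, and suppose F satisfies q-growth with constant κ > 0 and q ∈ [1,2] on the set {y : F(y) ≤ F(x₀) + γD̄}. Then for every x with F_γ(x) ≤ F_γ(x₀) and F_γ(x) − F* ≥ γD̄: F_γ(x) − inf F_γ ≥ (κ/(2q))‖x − x̄‖^q, where x̄ is the Euclidean projection of x onto X*. -/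
noncomputable section

/-- let `F, F_γ : ℝⁿ → ℝ`, `γ > 0`, `D̄ > 0` with
`F_γ(x) ≤ F(x) ≤ F_γ(x) + γD̄` for all `x`.  Assume `F` has nonempty minimizer set `X*`
with minimal value `F*`, fix `x₀`, and suppose `F` satisfies `q`-growth with constant
`κ > 0`, `q ∈ [1,2]`, on `{y : F(y) ≤ F(x₀) + γD̄}` (where `ybar` denotes the Euclidean
projection of `y` onto `X*`).  Then for every `x` with `F_γ(x) ≤ F_γ(x₀)` and
`F_γ(x) − F* ≥ γD̄`: `F_γ(x) − inf F_γ ≥ (κ/(2q))‖x − xbar‖^q`. -/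
theorem nesterov_smoothing_q_growth (n : ℕ)
    (F Fγ : EuclideanSpace ℝ (Fin n) → ℝ) (γ Dbar : ℝ) (hγ : 0 < γ) (hD : 0 < Dbar)
    (happrox : ∀ x, Fγ x ≤ F x ∧ F x ≤ Fγ x + γ * Dbar)
    (Fs : ℝ) (Xs : Set (EuclideanSpace ℝ (Fin n)))
    (hXsne : Xs.Nonempty) (hXs : Xs = {y | F y = Fs}) (hmin : ∀ y, Fs ≤ F y)
    (x₀ : EuclideanSpace ℝ (Fin n)) (κ q : ℝ) (hκ : 0 < κ) (hq1 : 1 ≤ q) (hq2 : q ≤ 2)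
    (hgrowth : ∀ y, F y ≤ F x₀ + γ * Dbar →
      ∀ ybar ∈ Xs, (∀ z ∈ Xs, ‖y - ybar‖ ≤ ‖y - z‖) →
        κ / q * ‖y - ybar‖ ^ q ≤ F y - Fs) :
    ∀ x, Fγ x ≤ Fγ x₀ → γ * Dbar ≤ Fγ x - Fs →
      ∀ xbar ∈ Xs, (∀ z ∈ Xs, ‖x - xbar‖ ≤ ‖x - z‖) →
        κ / (2 * q) * ‖x - xbar‖ ^ q ≤ Fγ x - sInf (Set.range Fγ) := by
  intro x hx0 hgap xbar hxbar hproj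
  obtain ⟨xs, hxs⟩ := hXsne
  have hFxs : F xs = Fs := by rw [hXs] at hxs; exact hxs
  -- sInf ≤ Fs
  have hbdd : BddBelow (Set.range Fγ) := by
    refine ⟨Fs - γ * Dbar, ?_⟩
    rintro _ ⟨y, rfl⟩
    have := (happrox y).2
    have := hmin y
    linarith
  have hsinf : sInf (Set.range Fγ) ≤ Fs := by
    calc sInf (Set.range Fγ) ≤ Fγ xs := csInf_le hbdd ⟨xs, rfl⟩
    _ ≤ F xs := (happrox xs).1
    _ = Fs := hFxs
  have hFx : F x ≤ F x₀ + γ * Dbar := by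
    have h1 := (happrox x).2
    have h2 := (happrox x₀).1
    linarith
  have hg := hgrowth x hFx xbar hxbar hproj
  have h1 := (happrox x).2
  have hnn : 0 ≤ ‖x - xbar‖ ^ q := Real.rpow_nonneg (norm_nonneg _) q
  have hq0 : 0 < q := lt_of_lt_of_le one_pos hq1
  have key : κ / (2 * q) * ‖x - xbar‖ ^ q ≤ Fγ x - Fs := by
    have : κ / q * ‖x - xbar‖ ^ q ≤ 2 * (Fγ x - Fs) := by linarith
    have heq : κ / (2 * q) * ‖x - xbar‖ ^ q = (κ / q * ‖x - xbar‖ ^ q) / 2 := by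
      rw [mul_comm 2 q, ← div_div]; ring
    rw [heq]; linarith
  linarith
end
end

section
/- Let F, F_γ : ℝⁿ → ℝ, γ > 0 and D̄ > 0 satisfy F_γ(x) ≤ F(x) ≤ F_γ(x) + γD̄ for all x ∈ ℝⁿ. Assume F has nonempty minimizer set X* with minimal value F*, fix x₀, suppose F satisfies q-growth with constant κ > 0 and q ∈ [1,2] on the set {y : F(y) ≤ F(x₀) + γD̄}, and additionally suppose there is R > 0 such that ‖y − ȳ‖ ≤ R for every y with F_γ(y) ≤ F_γ(x₀), where ȳ is the Euclidean projection of y onto X*. Then for every x with F_γ(x) ≤ F_γ(x₀) and F_γ(x) − F* ≥ γD̄: F_γ(x) − inf F_γ ≥ (κ/(2qR^{2−q}))‖x − x̄‖², where x̄ is the Euclidean projection of x onto X*. -/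
noncomputable section

/-- let `F, F_γ : ℝⁿ → ℝ`, `γ > 0`, `D̄ > 0` with
`F_γ(x) ≤ F(x) ≤ F_γ(x) + γD̄` for all `x`.  Assume `F` has nonempty minimizer set `X*`
with minimal value `F*`, fix `x₀`, suppose `F` satisfies `q`-growth with constant
`κ > 0`, `q ∈ [1,2]`, on `{y : F(y) ≤ F(x₀) + γD̄}` (`ybar` being the Euclidean
projection of `y` onto `X*`), and additionally suppose there is `R > 0` with
`‖y − ybar‖ ≤ R` for every `y` with `F_γ(y) ≤ F_γ(x₀)`.  Then for every `x` with
`F_γ(x) ≤ F_γ(x₀)` and `F_γ(x) − F* ≥ γD̄`: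
`F_γ(x) − inf F_γ ≥ (κ/(2qR^{2−q}))‖x − xbar‖²`. -/
theorem nesterov_smoothing_two_growth (n : ℕ)
    (F Fγ : EuclideanSpace ℝ (Fin n) → ℝ) (γ Dbar : ℝ) (hγ : 0 < γ) (hD : 0 < Dbar)
    (happrox : ∀ x, Fγ x ≤ F x ∧ F x ≤ Fγ x + γ * Dbar)
    (Fs : ℝ) (Xs : Set (EuclideanSpace ℝ (Fin n)))
    (hXsne : Xs.Nonempty) (hXs : Xs = {y | F y = Fs}) (hmin : ∀ y, Fs ≤ F y)
    (x₀ : EuclideanSpace ℝ (Fin n)) (κ q : ℝ) (hκ : 0 < κ) (hq1 : 1 ≤ q) (hq2 : q ≤ 2)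
    (hgrowth : ∀ y, F y ≤ F x₀ + γ * Dbar →
      ∀ ybar ∈ Xs, (∀ z ∈ Xs, ‖y - ybar‖ ≤ ‖y - z‖) →
        κ / q * ‖y - ybar‖ ^ q ≤ F y - Fs)
    (R : ℝ) (hR : 0 < R)
    (hbound : ∀ y, Fγ y ≤ Fγ x₀ →
      ∀ ybar ∈ Xs, (∀ z ∈ Xs, ‖y - ybar‖ ≤ ‖y - z‖) → ‖y - ybar‖ ≤ R) :
    ∀ x, Fγ x ≤ Fγ x₀ → γ * Dbar ≤ Fγ x - Fs →
      ∀ xbar ∈ Xs, (∀ z ∈ Xs, ‖x - xbar‖ ≤ ‖x - z‖) →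
        κ / (2 * q * R ^ (2 - q)) * ‖x - xbar‖ ^ 2 ≤ Fγ x - sInf (Set.range Fγ) := by

  intro x hx hgap xbar hxbar hproj
  obtain ⟨x', hx'⟩ := hXsne
  have hFx' : F x' = Fs := by rw [hXs] at hx'; exact hx'
  have hbdd : BddBelow (Set.range Fγ) := by
    refine ⟨Fs - γ * Dbar, ?_⟩
    rintro _ ⟨y, rfl⟩
    have h1 := (happrox y).2
    have h2 := hmin y
    linarith
  have hsinf : sInf (Set.range Fγ) ≤ Fs := by
    have h1 : sInf (Set.range Fγ) ≤ Fγ x' := csInf_le hbdd ⟨x', rfl⟩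
    have h2 := (happrox x').1
    linarith [hFx' ▸ h2]
  have hFx0 : F x ≤ F x₀ + γ * Dbar := by
    have h1 := (happrox x).2
    have h2 := (happrox x₀).1
    linarith
  have hgr := hgrowth x hFx0 xbar hxbar hproj
  have hRle : ‖x - xbar‖ ≤ R := hbound x hx xbar hxbar hproj
  set r := ‖x - xbar‖ with hr
  have hr0 : (0:ℝ) ≤ r := norm_nonneg _
  have hq0 : (0:ℝ) < q := lt_of_lt_of_le one_pos hq1
  have hA : (0:ℝ) < R ^ (2 - q) := Real.rpow_pos_of_pos hR _
  have key : r ^ 2 ≤ r ^ q * R ^ (2 - q) := by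
    rcases eq_or_lt_of_le hr0 with h | h
    · rw [← h, Real.zero_rpow (ne_of_gt hq0)]
      norm_num
    · have heq : r ^ 2 = r ^ q * r ^ (2 - q) := by
        rw [← Real.rpow_natCast r 2, ← Real.rpow_add h]
        norm_num
      rw [heq]
      exact mul_le_mul_of_nonneg_left
        (Real.rpow_le_rpow hr0 hRle (by linarith)) (Real.rpow_nonneg hr0 q)
  have hrq0 : (0:ℝ) ≤ r ^ q := Real.rpow_nonneg hr0 q
  have step1 : κ / (2 * q * R ^ (2 - q)) * r ^ 2 ≤ κ / (2 * q) * r ^ q := by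
    have h1 : κ / (2 * q * R ^ (2 - q)) * r ^ 2
        ≤ κ / (2 * q * R ^ (2 - q)) * (r ^ q * R ^ (2 - q)) := by
      apply mul_le_mul_of_nonneg_left key
      positivity
    have h2 : κ / (2 * q * R ^ (2 - q)) * (r ^ q * R ^ (2 - q)) = κ / (2 * q) * r ^ q := by
      field_simp
    linarith
  have step2 : κ / (2 * q) * r ^ q ≤ Fγ x - Fs := by
    have hFup := (happrox x).2
    have : κ / q * r ^ q ≤ Fγ x + γ * Dbar - Fs := by linarith
    have h2 : κ / (2 * q) * r ^ q * 2 = κ / q * r ^ q := by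
      field_simp
    linarith
  linarith
end
end

section
/- Let F : ℝⁿ → ℝ have nonempty closed convex minimizer set X* with minimal value F*, let F_γ : ℝⁿ → ℝ satisfy F_γ ≤ F pointwise, let ‖·‖₁ be a weighted Euclidean norm with weights Lᵢ > 0, and let κ̄ > 0, q̄ ∈ [1,2]. Suppose F_γ(x₀) − F* ≥ (κ̄/2^{q̄/2})‖x₀ − x̄₀‖₁^{q̄}, where x̄₀ is the ‖·‖₁-projection of x₀ onto X*. (i) If a point x_k and a number A_k > 0 satisfy F_γ(x_k) − F_γ(x̄₀) ≤ ‖x₀ − x̄₀‖₁²/(2A_k), then F_γ(x_k) − F* ≤ (1/(A_k κ̄^{2/q̄})) (F_γ(x₀) − F*)^{2/q̄}. (ii) If moreover F_γ(x₀) ≤ F(x₀), A_k ≥ k²/(4N²), α ∈ (0,1) and k ≥ √( 4N² (F(x₀) − F*)^{(2−q̄)/q̄} / (κ̄^{2/q̄} α) ), then F_γ(x_k) − F* ≤ α (F_γ(x₀) − F*). -/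
noncomputable section

/-- The squared weighted norm `‖x‖₁² = ∑ᵢ Lᵢ ‖Uᵢᵀ x‖²`. -/
def wnormSq {n N : ℕ} (b : Fin n → Fin N) (L : Fin N → ℝ)
    (x : EuclideanSpace ℝ (Fin n)) : ℝ :=
  ∑ i : Fin N, L i * ‖blockProj b i x‖ ^ 2

/-- The weighted norm `‖x‖₁ = (∑ᵢ Lᵢ ‖Uᵢᵀ x‖²)^{1/2}`. -/
def wnorm {n N : ℕ} (b : Fin n → Fin N) (L : Fin N → ℝ)
    (x : EuclideanSpace ℝ (Fin n)) : ℝ :=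
  Real.sqrt (wnormSq b L x)

/-!
Raising the growth condition at `x₀` to the power `2/q̄` bounds `‖x₀ − x̄₀‖₁²` by
`2 (F_γ(x₀) − F*)^{2/q̄} / κ̄^{2/q̄}`; inserted into the rate bound, together with
`F_γ(x̄₀) ≤ F(x̄₀) = F*`, this gives (i). For (ii) write `E^{2/q̄} = E · E^{(2−q̄)/q̄}` with
`E = F_γ(x₀) − F*`: the second factor is at most `(F(x₀) − F*)^{(2−q̄)/q̄}`, which the lower bound
on `k` makes at most `α A_k κ̄^{2/q̄}`.
-/

theorem wnormSq_nonneg {n N : ℕ} (b : Fin n → Fin N) {L : Fin N → ℝ} (hL : ∀ i, 0 ≤ L i)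
    (x : EuclideanSpace ℝ (Fin n)) : 0 ≤ wnormSq b L x :=
  Finset.sum_nonneg fun i _ => mul_nonneg (hL i) (sq_nonneg _)

theorem wnorm_sq {n N : ℕ} (b : Fin n → Fin N) {L : Fin N → ℝ} (hL : ∀ i, 0 ≤ L i)
    (x : EuclideanSpace ℝ (Fin n)) : wnorm b L x ^ 2 = wnormSq b L x :=
  Real.sq_sqrt (wnormSq_nonneg b hL x)

theorem growth_rpow_two_div {κ q D : ℝ} (hκ : 0 ≤ κ) (hq : 0 < q) (hD : 0 ≤ D) :
    (κ / 2 ^ (q / 2) * D ^ q) ^ (2 / q) = κ ^ (2 / q) / 2 * D ^ 2 := by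
  have h2 : (0 : ℝ) ≤ 2 := zero_le_two
  rw [Real.mul_rpow (by positivity) (by positivity), Real.div_rpow hκ (by positivity),
    ← Real.rpow_mul h2, ← Real.rpow_mul hD, div_mul_div_cancel₀ two_ne_zero,
    div_self hq.ne', Real.rpow_one, mul_div_cancel₀ _ hq.ne', Real.rpow_two]

theorem le_rpow_two_div_of_growth {κ q D E A δ : ℝ} (hκ : 0 < κ) (hq : 0 < q) (hD : 0 ≤ D)
    (hA : 0 < A) (hgrowth : κ / 2 ^ (q / 2) * D ^ q ≤ E) (hδ : δ ≤ D ^ 2 / (2 * A)) :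
    δ ≤ 1 / (A * κ ^ (2 / q)) * E ^ (2 / q) := by
  have hκq : 0 < κ ^ (2 / q) := Real.rpow_pos_of_pos hκ _
  have hD2 : κ ^ (2 / q) / 2 * D ^ 2 ≤ E ^ (2 / q) := by
    rw [← growth_rpow_two_div hκ.le hq hD]
    exact Real.rpow_le_rpow (by positivity) hgrowth (by positivity)
  calc δ ≤ D ^ 2 / (2 * A) := hδ
    _ = 1 / (A * κ ^ (2 / q)) * (κ ^ (2 / q) / 2 * D ^ 2) := by field_simp
    _ ≤ 1 / (A * κ ^ (2 / q)) * E ^ (2 / q) := by gcongr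

theorem le_mul_of_rpow_le {κ q E E' A α δ : ℝ} (hq : 0 < q) (hq2 : q ≤ 2) (hE : 0 ≤ E)
    (hEE' : E ≤ E') (hA : 0 < A) (hκ : 0 < κ)
    (hδ : δ ≤ 1 / (A * κ ^ (2 / q)) * E ^ (2 / q))
    (hE' : E' ^ ((2 - q) / q) ≤ κ ^ (2 / q) * α * A) :
    δ ≤ α * E := by
  have hκq : 0 < κ ^ (2 / q) := Real.rpow_pos_of_pos hκ _
  have hsplit : E ^ (2 / q) = E * E ^ ((2 - q) / q) := by
    have hexp : 2 / q = 1 + (2 - q) / q := by field_simp; ring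
    rw [hexp, Real.rpow_add' hE (hexp ▸ (div_pos two_pos hq).ne'), Real.rpow_one]
  have hmono : E ^ ((2 - q) / q) ≤ E' ^ ((2 - q) / q) :=
    Real.rpow_le_rpow hE hEE' (div_nonneg (by linarith) hq.le)
  calc δ ≤ 1 / (A * κ ^ (2 / q)) * (E * E ^ ((2 - q) / q)) := hsplit ▸ hδ
    _ ≤ 1 / (A * κ ^ (2 / q)) * (E * (κ ^ (2 / q) * α * A)) := by
        gcongr; exact hmono.trans hE'
    _ = α * E := by field_simp

theorem le_mul_of_sqrt_le {c m x k A : ℝ} (hc : 0 < c) (hm : 0 < m)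
    (hk : Real.sqrt (c * x / m) ≤ k) (hA : k ^ 2 / c ≤ A) : x ≤ m * A := by
  have hk2 : c * x / m ≤ k ^ 2 := (Real.sqrt_le_iff.mp hk).2
  have hxm : x / m ≤ A := by
    calc x / m = c * x / m / c := by field_simp
      _ ≤ k ^ 2 / c := by gcongr
      _ ≤ A := hA
  rwa [div_le_iff₀ hm, mul_comm] at hxm

theorem restart_condition_accelerated_general (n N : ℕ) (hN : 0 < N) (b : Fin n → Fin N)
    (L : Fin N → ℝ) (hL : ∀ i, 0 < L i)
    (F Fγ : EuclideanSpace ℝ (Fin n) → ℝ) (hle : ∀ x, Fγ x ≤ F x)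
    (Xs : Set (EuclideanSpace ℝ (Fin n)))
    (Fs : ℝ) (hXs : Xs = {y | F y = Fs})
    (κbar qbar : ℝ) (hκ : 0 < κbar) (hq1 : 1 ≤ qbar) (hq2 : qbar ≤ 2)
    (x₀ xbar₀ : EuclideanSpace ℝ (Fin n)) (hmem : xbar₀ ∈ Xs)
    (hgrowth₀ : κbar / 2 ^ (qbar / 2) * wnorm b L (x₀ - xbar₀) ^ qbar ≤ Fγ x₀ - Fs)
    (k : ℕ) (xk : EuclideanSpace ℝ (Fin n)) (Ak : ℝ) (hAk : 0 < Ak)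
    (hrate : Fγ xk - Fγ xbar₀ ≤ wnormSq b L (x₀ - xbar₀) / (2 * Ak)) :
    (Fγ xk - Fs ≤ 1 / (Ak * κbar ^ (2 / qbar)) * (Fγ x₀ - Fs) ^ (2 / qbar))
    ∧ (Fγ x₀ ≤ F x₀ → (k : ℝ) ^ 2 / (4 * (N : ℝ) ^ 2) ≤ Ak →
        ∀ α : ℝ, 0 < α → α < 1 →
          Real.sqrt (4 * (N : ℝ) ^ 2 * (F x₀ - Fs) ^ ((2 - qbar) / qbar)
              / (κbar ^ (2 / qbar) * α)) ≤ (k : ℝ) →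
          Fγ xk - Fs ≤ α * (Fγ x₀ - Fs)) := by
  have hq : 0 < qbar := one_pos.trans_le hq1
  have hD : 0 ≤ wnorm b L (x₀ - xbar₀) := Real.sqrt_nonneg _
  have hFγxbar : Fγ xbar₀ ≤ Fs := (hle xbar₀).trans (by rw [hXs] at hmem; exact hmem.le)
  have hgap : Fγ xk - Fs ≤ wnorm b L (x₀ - xbar₀) ^ 2 / (2 * Ak) := by
    rw [wnorm_sq b fun i => (hL i).le]; linarith
  have hpart1 := le_rpow_two_div_of_growth hκ hq hD hAk hgrowth₀ hgap
  refine ⟨hpart1, fun hx₀ hAkN α hα _ hk => ?_⟩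
  have hE : 0 ≤ Fγ x₀ - Fs := (by positivity : 0 ≤ κbar / 2 ^ (qbar / 2) * _).trans hgrowth₀
  refine le_mul_of_rpow_le hq hq2 hE (sub_le_sub_right hx₀ Fs) hAk hκ hpart1 ?_
  have hm : 0 < κbar ^ (2 / qbar) * α := mul_pos (Real.rpow_pos_of_pos hκ _) hα
  exact le_mul_of_sqrt_le (by positivity) hm hk hAkN

/-- restart condition for the accelerated coordinate descent method.
`F` has nonempty closed convex minimizer set `X*` with minimal value `F*`, `F_γ ≤ F`,
growth at `x₀`: `F_γ(x₀) − F* ≥ (κ̄/2^{q̄/2})‖x₀ − x̄₀‖₁^{q̄}` (`x̄₀` being the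
`‖·‖₁`-projection of `x₀` onto `X*`).
(i) If `F_γ(x_k) − F_γ(x̄₀) ≤ ‖x₀ − x̄₀‖₁²/(2A_k)` with `A_k > 0`, then
`F_γ(x_k) − F* ≤ (1/(A_k κ̄^{2/q̄})) (F_γ(x₀) − F*)^{2/q̄}`.
(ii) If moreover `F_γ(x₀) ≤ F(x₀)`, `A_k ≥ k²/(4N²)`, `α ∈ (0,1)` and
`k ≥ √(4N²(F(x₀) − F*)^{(2−q̄)/q̄}/(κ̄^{2/q̄}α))`, then
`F_γ(x_k) − F* ≤ α(F_γ(x₀) − F*)`. -/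
theorem restart_condition_accelerated (n N : ℕ) (hN : 0 < N) (b : Fin n → Fin N)
    (L : Fin N → ℝ) (hL : ∀ i, 0 < L i)
    (F Fγ : EuclideanSpace ℝ (Fin n) → ℝ) (hle : ∀ x, Fγ x ≤ F x)
    (Xs : Set (EuclideanSpace ℝ (Fin n)))
    (hXsne : Xs.Nonempty) (hXscl : IsClosed Xs) (hXsconv : Convex ℝ Xs)
    (Fs : ℝ) (hmin : ∀ y, Fs ≤ F y) (hXs : Xs = {y | F y = Fs})
    (κbar qbar : ℝ) (hκ : 0 < κbar) (hq1 : 1 ≤ qbar) (hq2 : qbar ≤ 2)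
    (x₀ xbar₀ : EuclideanSpace ℝ (Fin n)) (hmem : xbar₀ ∈ Xs)
    (hproj : ∀ z ∈ Xs, wnorm b L (x₀ - xbar₀) ≤ wnorm b L (x₀ - z))
    (hgrowth₀ : κbar / 2 ^ (qbar / 2) * wnorm b L (x₀ - xbar₀) ^ qbar ≤ Fγ x₀ - Fs)
    (k : ℕ) (xk : EuclideanSpace ℝ (Fin n)) (Ak : ℝ) (hAk : 0 < Ak)
    (hrate : Fγ xk - Fγ xbar₀ ≤ wnormSq b L (x₀ - xbar₀) / (2 * Ak)) :
    (Fγ xk - Fs ≤ 1 / (Ak * κbar ^ (2 / qbar)) * (Fγ x₀ - Fs) ^ (2 / qbar))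
    ∧ (Fγ x₀ ≤ F x₀ → (k : ℝ) ^ 2 / (4 * (N : ℝ) ^ 2) ≤ Ak →
        ∀ α : ℝ, 0 < α → α < 1 →
          Real.sqrt (4 * (N : ℝ) ^ 2 * (F x₀ - Fs) ^ ((2 - qbar) / qbar)
              / (κbar ^ (2 / qbar) * α)) ≤ (k : ℝ) →
          Fγ xk - Fs ≤ α * (Fγ x₀ - Fs)) :=
  restart_condition_accelerated_general n N hN b L hL F Fγ hle Xs Fs hXs κbar qbar hκ hq1 hq2 x₀
    xbar₀ hmem hgrowth₀ k xk Ak hAk hrate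
end
end

section
/- Let φ : ℝⁿ → ℝ be differentiable and strictly convex along coordinates, and let F : ℝⁿ → ℝ be differentiable and relative smooth along coordinates with respect to φ with constants Lᵢ > 0. Fix x ∈ ℝⁿ and a block i, and let d* ∈ ℝ^{nᵢ} be a minimizer of d ↦ ⟨Uᵢᵀ∇F(x), d⟩ + Lᵢ D_φ(x + Uᵢd, x). Then F(x + Uᵢd*) ≤ F(x) − Lᵢ D_φ(x, x + Uᵢd*), where D_φ(x, x + Uᵢd*) = φ(x) − φ(x + Uᵢd*) + ⟨Uᵢᵀ∇φ(x + Uᵢd*), d*⟩. -/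
/-! Minimality of `d*` tested only along the ray `t ↦ t • d*`, which stays in the block subspace,
gives at `t = 1` the first-order condition `⟪∇F x, d*⟫ + Lᵢ ⟪∇φ (x + d*) - ∇φ x, d*⟫ = 0`.
Substituting it into the relative-smoothness inequality at `d*` turns the right-hand side into
`F x - Lᵢ D_φ(x, x + d*)`. -/

noncomputable section
open scoped RealInnerProductSpace

theorem HasFDerivAt.apply_self_eq_zero_of_forall_le_smul {E : Type*} [NormedAddCommGroup E]
    [NormedSpace ℝ E] {f : E → ℝ} {f' : E →L[ℝ] ℝ} {d : E} (hf : HasFDerivAt f f' d)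
    (hmin : ∀ t : ℝ, f d ≤ f (t • d)) : f' d = 0 := by
  have hray : HasDerivAt (fun t : ℝ => f (t • d)) (f' d) 1 :=
    hf.comp_hasDerivAt_of_eq 1 (by simpa using (hasDerivAt_id' (1 : ℝ)).smul_const d)
      (one_smul ℝ d).symm
  exact IsLocalMin.hasDerivAt_eq_zero (.of_forall fun t => by simpa using hmin t) hray

theorem inner_add_mul_inner_gradient_sub_eq_zero_of_forall_le_smul {E : Type*}
    [NormedAddCommGroup E] [InnerProductSpace ℝ E] [CompleteSpace E] {φ : E → ℝ} {g x d : E}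
    {L : ℝ} (hφ : DifferentiableAt ℝ φ (x + d))
    (hmin : ∀ t : ℝ, ⟪g, d⟫ + L * (φ (x + d) - φ x - ⟪gradient φ x, d⟫)
      ≤ ⟪g, t • d⟫ + L * (φ (x + t • d) - φ x - ⟪gradient φ x, t • d⟫)) :
    ⟪g, d⟫ + L * (⟪gradient φ (x + d), d⟫ - ⟪gradient φ x, d⟫) = 0 := by
  have hshift : HasFDerivAt (fun v => φ (x + v)) (fderiv ℝ φ (x + d)) d :=
    (hasFDerivAt_comp_add_left x).2 hφ.hasFDerivAt
  have hmodel := (innerSL ℝ g).hasFDerivAt.add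
    (((hshift.sub_const (φ x)).sub (innerSL ℝ (gradient φ x)).hasFDerivAt).const_mul L)
  simpa [inner_gradient_left] using hmodel.apply_self_eq_zero_of_forall_le_smul hmin

theorem blockProj_smul {n N : ℕ} (b : Fin n → Fin N) (i : Fin N) (c : ℝ)
    (x : EuclideanSpace ℝ (Fin n)) : blockProj b i (c • x) = c • blockProj b i x := by
  ext j
  by_cases hj : b j = i <;> simp [blockProj, hj]

theorem relative_smooth_coordinate_descent_step_general (n N : ℕ) (b : Fin n → Fin N)
    (φ F : EuclideanSpace ℝ (Fin n) → ℝ)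
    (hφdiff : Differentiable ℝ φ)
    (L : Fin N → ℝ)
    (hrel : ∀ (x d : EuclideanSpace ℝ (Fin n)) (i : Fin N), blockProj b i d = d →
      F (x + d) ≤ F x + ⟪gradient F x, d⟫
        + L i * (φ (x + d) - φ x - ⟪gradient φ x, d⟫))
    (x : EuclideanSpace ℝ (Fin n)) (i : Fin N)
    (dstar : EuclideanSpace ℝ (Fin n)) (hdstar : blockProj b i dstar = dstar)
    (hmin : ∀ d : EuclideanSpace ℝ (Fin n), blockProj b i d = d →
      ⟪gradient F x, dstar⟫ + L i * (φ (x + dstar) - φ x - ⟪gradient φ x, dstar⟫)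
        ≤ ⟪gradient F x, d⟫ + L i * (φ (x + d) - φ x - ⟪gradient φ x, d⟫)) :
    F (x + dstar) ≤ F x - L i * (φ x - φ (x + dstar) + ⟪gradient φ (x + dstar), dstar⟫) := by
  have hstationary : ⟪gradient F x, dstar⟫
      + L i * (⟪gradient φ (x + dstar), dstar⟫ - ⟪gradient φ x, dstar⟫) = 0 :=
    inner_add_mul_inner_gradient_sub_eq_zero_of_forall_le_smul (hφdiff _) fun t =>
      hmin (t • dstar) (by rw [blockProj_smul, hdstar])
  linarith [hrel x dstar i hdstar]

/-- let `φ` be differentiable and strictly convex along coordinates, and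
`F` differentiable and relative smooth along coordinates w.r.t. `φ` with constants
`Lᵢ > 0`.  If `d*` minimizes `d ↦ ⟨Uᵢᵀ∇F(x), d⟩ + Lᵢ D_φ(x + Uᵢd, x)` over the block-`i`
subspace, then `F(x + Uᵢd*) ≤ F(x) − Lᵢ D_φ(x, x + Uᵢd*)`, where
`D_φ(x, x + Uᵢd*) = φ(x) − φ(x + Uᵢd*) + ⟨Uᵢᵀ∇φ(x + Uᵢd*), d*⟩`. -/
theorem relative_smooth_coordinate_descent_step (n N : ℕ) (b : Fin n → Fin N)
    (φ F : EuclideanSpace ℝ (Fin n) → ℝ)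
    (hφdiff : Differentiable ℝ φ) (hFdiff : Differentiable ℝ F)
    (hφsc : ∀ (x : EuclideanSpace ℝ (Fin n)) (i : Fin N),
      StrictConvexOn ℝ {d : EuclideanSpace ℝ (Fin n) | blockProj b i d = d}
        (fun d => φ (x + d)))
    (L : Fin N → ℝ) (hL : ∀ i, 0 < L i)
    (hrel : ∀ (x d : EuclideanSpace ℝ (Fin n)) (i : Fin N), blockProj b i d = d →
      F (x + d) ≤ F x + ⟪gradient F x, d⟫
        + L i * (φ (x + d) - φ x - ⟪gradient φ x, d⟫))
    (x : EuclideanSpace ℝ (Fin n)) (i : Fin N)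
    (dstar : EuclideanSpace ℝ (Fin n)) (hdstar : blockProj b i dstar = dstar)
    (hmin : ∀ d : EuclideanSpace ℝ (Fin n), blockProj b i d = d →
      ⟪gradient F x, dstar⟫ + L i * (φ (x + dstar) - φ x - ⟪gradient φ x, dstar⟫)
        ≤ ⟪gradient F x, d⟫ + L i * (φ (x + d) - φ x - ⟪gradient φ x, d⟫)) :
    F (x + dstar) ≤ F x - L i * (φ x - φ (x + dstar) + ⟪gradient φ (x + dstar), dstar⟫) :=
  relative_smooth_coordinate_descent_step_general n N b φ F hφdiff L hrel x i dstar hdstar hmin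
end
end
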